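/- Let u ∈ ℝⁿ, M = ∇²g(u), and let d be the modified Newton direction at u. Then the following inequalities hold: (i) (γ(∇g(u))_k + γw_k)·γ(Md)_k ≤ −(γ(∇g(u))_k + γw_k)² for all k ∈ A⁺₊(u) ∪ I°₊(u) ∪ {k ∈ I⁺(u) : F_k(u) < 0}; (ii) (γ(∇g(u))_k − γw_k)·γ(Md)_k ≤ −(γ(∇g(u))_k − γw_k)² for all k ∈ A⁻₋(u) ∪ I°₋(u) ∪ {k ∈ I⁻(u) : F_k(u) > 0}; (iii) u_k·d_k ≤ −u_k² for all k ∈ A⁺₊(u) ∪ A⁻₋(u) ∪ I°₊(u) ∪ I°₋(u) ∪ {k ∈ I⁺(u) : F_k(u) < 0} ∪ {k ∈ I⁻(u) : F_k(u) > 0}. -/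

import Mathlib

open scoped RealInnerProductSpace
open Filter Topology

noncomputable section

abbrev Euc (n : ℕ) := EuclideanSpace ℝ (Fin n)

variable {n : ℕ}

/-- Componentwise soft-thresholding operator `(S_{γw}(v))_k = sgn(v_k)·max(|v_k| − γw_k, 0)`. -/
def soft (γ : ℝ) (w : Fin n → ℝ) (v : Euc n) : Euc n :=
  WithLp.toLp 2 (fun k => Real.sign (v k) * max (|v k| - γ * w k) 0)

/-- The map `F(u) = u − S_{γw}(u − γ∇g(u))`. -/
def Fm (g : Euc n → ℝ) (γ : ℝ) (w : Fin n → ℝ) (u : Euc n) : Euc n :=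
  u - soft γ w (u - γ • gradient g u)

/-- The merit functional `Θ(u) = ‖F(u)‖₂²`. -/
def Th (g : Euc n → ℝ) (γ : ℝ) (w : Fin n → ℝ) (u : Euc n) : ℝ :=
  ‖Fm g γ w u‖ ^ 2

/-- The Hessian of `g` at `u`, applied to `d`: `∇²g(u)d`. -/
def hess (g : Euc n → ℝ) (u d : Euc n) : Euc n :=
  fderiv ℝ (gradient g) u d

/-- Standing assumptions on `g`: twice continuously differentiable, Lipschitz continuous
second derivative, and uniform bounds `c₁‖h‖² ≤ ⟨∇²g(u)h, h⟩ ≤ c₂‖h‖²`. -/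
structure Assump (n : ℕ) (g : Euc n → ℝ) (c₁ c₂ : ℝ) : Prop where
  contDiff : ContDiff ℝ 2 g
  lipHess : ∃ L : NNReal, LipschitzWith L fun u => fderiv ℝ (gradient g) u
  c1_pos : 0 < c₁
  c1_le_c2 : c₁ ≤ c₂
  lower : ∀ u h : Euc n, c₁ * ‖h‖ ^ 2 ≤ ⟪hess g u h, h⟫
  upper : ∀ u h : Euc n, ⟪hess g u h, h⟫ ≤ c₂ * ‖h‖ ^ 2

/-- `A⁺(u)`. -/
def Ap (g : Euc n → ℝ) (γ : ℝ) (w : Fin n → ℝ) (u : Euc n) : Set (Fin n) :=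
  {k | γ * gradient g u k + γ * w k < u k}

/-- `A⁻(u)`. -/
def Am (g : Euc n → ℝ) (γ : ℝ) (w : Fin n → ℝ) (u : Euc n) : Set (Fin n) :=
  {k | u k < γ * gradient g u k - γ * w k}

/-- `A(u) = A⁺(u) ∪ A⁻(u)`. -/
def Aset (g : Euc n → ℝ) (γ : ℝ) (w : Fin n → ℝ) (u : Euc n) : Set (Fin n) :=
  Ap g γ w u ∪ Am g γ w u

/-- `I°(u)`. -/
def Iz (g : Euc n → ℝ) (γ : ℝ) (w : Fin n → ℝ) (u : Euc n) : Set (Fin n) :=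
  {k | γ * gradient g u k - γ * w k < u k ∧ u k < γ * gradient g u k + γ * w k}

/-- `I⁺(u)`. -/
def Ipl (g : Euc n → ℝ) (γ : ℝ) (w : Fin n → ℝ) (u : Euc n) : Set (Fin n) :=
  {k | u k = γ * gradient g u k + γ * w k}

/-- `I⁻(u)`. -/
def Imi (g : Euc n → ℝ) (γ : ℝ) (w : Fin n → ℝ) (u : Euc n) : Set (Fin n) :=
  {k | u k = γ * gradient g u k - γ * w k}

/-- `A⁺₊(u)`. -/
def App (g : Euc n → ℝ) (γ : ℝ) (w : Fin n → ℝ) (u : Euc n) : Set (Fin n) :=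
  {k | γ * gradient g u k + γ * w k < u k ∧ u k < 0}

/-- `A⁻₋(u)`. -/
def Amm (g : Euc n → ℝ) (γ : ℝ) (w : Fin n → ℝ) (u : Euc n) : Set (Fin n) :=
  {k | 0 < u k ∧ u k < γ * gradient g u k - γ * w k}

/-- `I°₊(u)`. -/
def Izp (g : Euc n → ℝ) (γ : ℝ) (w : Fin n → ℝ) (u : Euc n) : Set (Fin n) :=
  {k | γ * gradient g u k - γ * w k < u k ∧ u k < γ * gradient g u k + γ * w k ∧
    γ * gradient g u k + γ * w k < 0}

/-- `I°₋(u)`. -/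
def Izm (g : Euc n → ℝ) (γ : ℝ) (w : Fin n → ℝ) (u : Euc n) : Set (Fin n) :=
  {k | 0 < γ * gradient g u k - γ * w k ∧ γ * gradient g u k - γ * w k < u k ∧
    u k < γ * gradient g u k + γ * w k}

/-- `Ā⁺(u) = A⁺(u) \ A⁺₊(u)`. -/
def ApBar (g : Euc n → ℝ) (γ : ℝ) (w : Fin n → ℝ) (u : Euc n) : Set (Fin n) :=
  Ap g γ w u \ App g γ w u

/-- `Ā⁻(u) = A⁻(u) \ A⁻₋(u)`. -/
def AmBar (g : Euc n → ℝ) (γ : ℝ) (w : Fin n → ℝ) (u : Euc n) : Set (Fin n) :=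
  Am g γ w u \ Amm g γ w u

/-- `Ā(u) = Ā⁺(u) ∪ Ā⁻(u)`. -/
def ABar (g : Euc n → ℝ) (γ : ℝ) (w : Fin n → ℝ) (u : Euc n) : Set (Fin n) :=
  ApBar g γ w u ∪ AmBar g γ w u

/-- `Ī°(u) = I°(u) \ (I°₊(u) ∪ I°₋(u))`. -/
def IzBar (g : Euc n → ℝ) (γ : ℝ) (w : Fin n → ℝ) (u : Euc n) : Set (Fin n) :=
  Iz g γ w u \ (Izp g γ w u ∪ Izm g γ w u)

/-- `Ī⁺(u) = I⁺(u) ∪ A⁺₊(u) ∪ I°₊(u)`. -/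
def IplBar (g : Euc n → ℝ) (γ : ℝ) (w : Fin n → ℝ) (u : Euc n) : Set (Fin n) :=
  Ipl g γ w u ∪ App g γ w u ∪ Izp g γ w u

/-- `Ī⁻(u) = I⁻(u) ∪ A⁻₋(u) ∪ I°₋(u)`. -/
def ImiBar (g : Euc n → ℝ) (γ : ℝ) (w : Fin n → ℝ) (u : Euc n) : Set (Fin n) :=
  Imi g γ w u ∪ Amm g γ w u ∪ Izm g γ w u

/-- `d` is a modified Newton direction at `u`. -/
def IsModDir (g : Euc n → ℝ) (γ : ℝ) (w : Fin n → ℝ) (u d : Euc n) : Prop :=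
  (∀ k ∈ ABar g γ w u, γ * hess g u d k = - Fm g γ w u k) ∧
  (∀ k ∈ IzBar g γ w u, d k = - u k) ∧
  (∀ k ∈ IplBar g γ w u, 0 ≤ d k + u k ∧ 0 ≤ γ * hess g u d k + Fm g γ w u k ∧
    (d k + u k) * (γ * hess g u d k + Fm g γ w u k) = 0) ∧
  (∀ k ∈ ImiBar g γ w u, d k + u k ≤ 0 ∧ γ * hess g u d k + Fm g γ w u k ≤ 0 ∧
    (d k + u k) * (γ * hess g u d k + Fm g γ w u k) = 0)

/-- `d` is a B-Newton direction at `u` (unmodified index sets). -/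
def IsBDir (g : Euc n → ℝ) (γ : ℝ) (w : Fin n → ℝ) (u d : Euc n) : Prop :=
  (∀ k ∈ Aset g γ w u, γ * hess g u d k = - Fm g γ w u k) ∧
  (∀ k ∈ Iz g γ w u, d k = - u k) ∧
  (∀ k ∈ Ipl g γ w u, 0 ≤ d k + u k ∧ 0 ≤ γ * hess g u d k + Fm g γ w u k ∧
    (d k + u k) * (γ * hess g u d k + Fm g γ w u k) = 0) ∧
  (∀ k ∈ Imi g γ w u, d k + u k ≤ 0 ∧ γ * hess g u d k + Fm g γ w u k ≤ 0 ∧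
    (d k + u k) * (γ * hess g u d k + Fm g γ w u k) = 0)

/-- `t = β^l` where `l` is the smallest nonnegative integer satisfying the Armijo inequality. -/
def ArmijoStepsize (g : Euc n → ℝ) (γ : ℝ) (w : Fin n → ℝ) (β σ : ℝ) (u d : Euc n)
    (t : ℝ) : Prop :=
  ∃ l : ℕ, t = β ^ l ∧
    Th g γ w (u + (β ^ l) • d) ≤ (1 - 2 * σ * β ^ l) * Th g γ w u ∧
    ∀ l' < l, ¬ (Th g γ w (u + (β ^ l') • d) ≤ (1 - 2 * σ * β ^ l') * Th g γ w u)

/-- The modified B-semismooth Newton iteration with Armijo damping. -/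
def ModIter (g : Euc n → ℝ) (γ : ℝ) (w : Fin n → ℝ) (β σ : ℝ)
    (useq dseq : ℕ → Euc n) (tseq : ℕ → ℝ) : Prop :=
  (∀ j, IsModDir g γ w (useq j) (dseq j)) ∧
  (∀ j, ArmijoStepsize g γ w β σ (useq j) (dseq j) (tseq j)) ∧
  (∀ j, useq (j + 1) = useq j + tseq j • dseq j)

/-- The B-semismooth Newton iteration (unmodified index sets) with Armijo damping. -/
def BIter (g : Euc n → ℝ) (γ : ℝ) (w : Fin n → ℝ) (β σ : ℝ)
    (useq dseq : ℕ → Euc n) (tseq : ℕ → ℝ) : Prop :=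
  (∀ j, IsBDir g γ w (useq j) (dseq j)) ∧
  (∀ j, ArmijoStepsize g γ w β σ (useq j) (dseq j) (tseq j)) ∧
  (∀ j, useq (j + 1) = useq j + tseq j • dseq j)

/-!
On `A⁺₊(u) ∪ I°₊(u) ∪ {k ∈ I⁺(u) : F_k(u) < 0}` the soft-thresholding formula gives
`F_k(u) ≤ γ(∇g(u))_k + γw_k < 0` and `u_k < 0`. These indices lie in `Ī⁺(u)`, where the
complementarity conditions of a modified Newton direction give `γ(Md)_k ≥ -F_k(u)` and
`d_k ≥ -u_k`; multiplying `x ≥ -a` by `a < 0` yields `a x ≤ -a²`. The minus side is symmetric.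
-/

section

variable {g : Euc n → ℝ} {γ : ℝ} {w : Fin n → ℝ} {u d : Euc n} {k : Fin n}

lemma mul_le_neg_sq_of_nonpos {a x : ℝ} (ha : a ≤ 0) (h : -a ≤ x) : a * x ≤ -a ^ 2 := by
  nlinarith

lemma mul_le_neg_sq_of_nonneg {a x : ℝ} (ha : 0 ≤ a) (h : x ≤ -a) : a * x ≤ -a ^ 2 := by
  nlinarith

lemma Fm_apply (g : Euc n → ℝ) (γ : ℝ) (w : Fin n → ℝ) (u : Euc n) (k : Fin n) :
    Fm g γ w u k = u k - Real.sign (u k - γ * gradient g u k) *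
      max (|u k - γ * gradient g u k| - γ * w k) 0 := by
  simp [Fm, soft]

lemma Fm_apply_of_mem_Ap (hγw : 0 ≤ γ * w k) (hk : k ∈ Ap g γ w u) :
    Fm g γ w u k = γ * gradient g u k + γ * w k := by
  have hk : γ * gradient g u k + γ * w k < u k := hk
  have hv : 0 < u k - γ * gradient g u k := by linarith
  rw [Fm_apply, Real.sign_of_pos hv, abs_of_pos hv, max_eq_left (by linarith)]
  ring

lemma Fm_apply_of_mem_Am (hγw : 0 ≤ γ * w k) (hk : k ∈ Am g γ w u) :
    Fm g γ w u k = γ * gradient g u k - γ * w k := by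
  have hk : u k < γ * gradient g u k - γ * w k := hk
  have hv : u k - γ * gradient g u k < 0 := by linarith
  rw [Fm_apply, Real.sign_of_neg hv, abs_of_neg hv, max_eq_left (by linarith)]
  ring

lemma Fm_apply_of_le_of_le (h₁ : γ * gradient g u k - γ * w k ≤ u k)
    (h₂ : u k ≤ γ * gradient g u k + γ * w k) : Fm g γ w u k = u k := by
  rw [Fm_apply, max_eq_right (by rw [sub_nonpos, abs_le]; constructor <;> linarith)]
  ring

lemma mem_IplBar_of_mem_App_union_Izp_or
    (hk : k ∈ App g γ w u ∪ Izp g γ w u ∨ (k ∈ Ipl g γ w u ∧ Fm g γ w u k < 0)) :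
    k ∈ IplBar g γ w u := by
  rcases hk with (h | h) | h
  exacts [Or.inl (Or.inr h), Or.inr h, Or.inl (Or.inl h.1)]

lemma mem_ImiBar_of_mem_Amm_union_Izm_or
    (hk : k ∈ Amm g γ w u ∪ Izm g γ w u ∨ (k ∈ Imi g γ w u ∧ 0 < Fm g γ w u k)) :
    k ∈ ImiBar g γ w u := by
  rcases hk with (h | h) | h
  exacts [Or.inl (Or.inr h), Or.inr h, Or.inl (Or.inl h.1)]

lemma Fm_apply_le_of_mem_App_union_Izp_or (hγw : 0 ≤ γ * w k)
    (hk : k ∈ App g γ w u ∪ Izp g γ w u ∨ (k ∈ Ipl g γ w u ∧ Fm g γ w u k < 0)) :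
    Fm g γ w u k ≤ γ * gradient g u k + γ * w k ∧ γ * gradient g u k + γ * w k < 0 ∧
      u k < 0 := by
  rcases hk with (⟨h₁, h₂⟩ | ⟨h₁, h₂, h₃⟩) | ⟨h₁, h₂⟩
  · rw [Fm_apply_of_mem_Ap hγw h₁]
    exact ⟨le_rfl, by linarith, h₂⟩
  · rw [Fm_apply_of_le_of_le h₁.le h₂.le]
    exact ⟨h₂.le, h₃, by linarith⟩
  · have h₁ : u k = γ * gradient g u k + γ * w k := h₁
    rw [Fm_apply_of_le_of_le (by linarith) h₁.le] at h₂ ⊢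
    exact ⟨h₁.le, by linarith, h₂⟩

lemma le_Fm_apply_of_mem_Amm_union_Izm_or (hγw : 0 ≤ γ * w k)
    (hk : k ∈ Amm g γ w u ∪ Izm g γ w u ∨ (k ∈ Imi g γ w u ∧ 0 < Fm g γ w u k)) :
    γ * gradient g u k - γ * w k ≤ Fm g γ w u k ∧ 0 < γ * gradient g u k - γ * w k ∧
      0 < u k := by
  rcases hk with (⟨h₁, h₂⟩ | ⟨h₁, h₂, h₃⟩) | ⟨h₁, h₂⟩
  · rw [Fm_apply_of_mem_Am hγw h₂]
    exact ⟨le_rfl, by linarith, h₁⟩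
  · rw [Fm_apply_of_le_of_le h₂.le h₃.le]
    exact ⟨h₂.le, h₁, by linarith⟩
  · have h₁ : u k = γ * gradient g u k - γ * w k := h₁
    rw [Fm_apply_of_le_of_le h₁.ge (by linarith)] at h₂ ⊢
    exact ⟨h₁.ge, by linarith, h₂⟩

lemma IsModDir.neg_le_hess_and_neg_le_of_mem_App_union_Izp_or (hd : IsModDir g γ w u d)
    (hγw : 0 ≤ γ * w k)
    (hk : k ∈ App g γ w u ∪ Izp g γ w u ∨ (k ∈ Ipl g γ w u ∧ Fm g γ w u k < 0)) :
    (γ * gradient g u k + γ * w k < 0 ∧ -(γ * gradient g u k + γ * w k) ≤ γ * hess g u d k) ∧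
      (u k < 0 ∧ -u k ≤ d k) := by
  obtain ⟨hF, hp, hu⟩ := Fm_apply_le_of_mem_App_union_Izp_or hγw hk
  obtain ⟨hdu, hMF, -⟩ := hd.2.2.1 k (mem_IplBar_of_mem_App_union_Izp_or hk)
  exact ⟨⟨hp, by linarith⟩, hu, by linarith⟩

lemma IsModDir.hess_le_neg_and_le_neg_of_mem_Amm_union_Izm_or (hd : IsModDir g γ w u d)
    (hγw : 0 ≤ γ * w k)
    (hk : k ∈ Amm g γ w u ∪ Izm g γ w u ∨ (k ∈ Imi g γ w u ∧ 0 < Fm g γ w u k)) :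
    (0 < γ * gradient g u k - γ * w k ∧ γ * hess g u d k ≤ -(γ * gradient g u k - γ * w k)) ∧
      (0 < u k ∧ d k ≤ -u k) := by
  obtain ⟨hF, hm, hu⟩ := le_Fm_apply_of_mem_Amm_union_Izm_or hγw hk
  obtain ⟨hdu, hMF, -⟩ := hd.2.2.2 k (mem_ImiBar_of_mem_Amm_union_Izm_or hk)
  exact ⟨⟨hm, by linarith⟩, hu, by linarith⟩

end

theorem stmt6_general {n : ℕ} (g : Euc n → ℝ)
    (w : Fin n → ℝ) (hw : ∀ k, 0 < w k) (γ : ℝ) (hγ : 0 < γ)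
    (u d : Euc n) (hd : IsModDir g γ w u d) :
    (∀ k : Fin n, k ∈ App g γ w u ∪ Izp g γ w u ∨ (k ∈ Ipl g γ w u ∧ Fm g γ w u k < 0) →
      (γ * gradient g u k + γ * w k) * (γ * hess g u d k)
        ≤ -(γ * gradient g u k + γ * w k) ^ 2) ∧
    (∀ k : Fin n, k ∈ Amm g γ w u ∪ Izm g γ w u ∨ (k ∈ Imi g γ w u ∧ 0 < Fm g γ w u k) →
      (γ * gradient g u k - γ * w k) * (γ * hess g u d k)
        ≤ -(γ * gradient g u k - γ * w k) ^ 2) ∧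
    (∀ k : Fin n, k ∈ App g γ w u ∪ Amm g γ w u ∪ Izp g γ w u ∪ Izm g γ w u ∨
        (k ∈ Ipl g γ w u ∧ Fm g γ w u k < 0) ∨ (k ∈ Imi g γ w u ∧ 0 < Fm g γ w u k) →
      u k * d k ≤ -(u k) ^ 2) := by
  have hγw : ∀ k, 0 ≤ γ * w k := fun k ↦ (mul_pos hγ (hw k)).le
  have plus := fun k ↦ hd.neg_le_hess_and_neg_le_of_mem_App_union_Izp_or (hγw k)
  have minus := fun k ↦ hd.hess_le_neg_and_le_neg_of_mem_Amm_union_Izm_or (hγw k)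
  refine ⟨fun k hk ↦ ?_, fun k hk ↦ ?_, fun k hk ↦ ?_⟩
  · exact mul_le_neg_sq_of_nonpos (plus k hk).1.1.le (plus k hk).1.2
  · exact mul_le_neg_sq_of_nonneg (minus k hk).1.1.le (minus k hk).1.2
  · obtain hk | hk : (k ∈ App g γ w u ∪ Izp g γ w u ∨ (k ∈ Ipl g γ w u ∧ Fm g γ w u k < 0)) ∨
        (k ∈ Amm g γ w u ∪ Izm g γ w u ∨ (k ∈ Imi g γ w u ∧ 0 < Fm g γ w u k)) := by
      simp only [Set.mem_union] at hk ⊢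
      tauto
    · exact mul_le_neg_sq_of_nonpos (plus k hk).2.1.le (plus k hk).2.2
    · exact mul_le_neg_sq_of_nonneg (minus k hk).2.1.le (minus k hk).2.2

/-- inequalities satisfied by the modified Newton direction. -/
theorem stmt6 {n : ℕ} (hn : 1 ≤ n) (c₁ c₂ : ℝ) (g : Euc n → ℝ) (hg : Assump n g c₁ c₂)
    (w : Fin n → ℝ) (hw : ∀ k, 0 < w k) (γ : ℝ) (hγ : 0 < γ)
    (u d : Euc n) (hd : IsModDir g γ w u d) :
    (∀ k : Fin n, k ∈ App g γ w u ∪ Izp g γ w u ∨ (k ∈ Ipl g γ w u ∧ Fm g γ w u k < 0) →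
      (γ * gradient g u k + γ * w k) * (γ * hess g u d k)
        ≤ -(γ * gradient g u k + γ * w k) ^ 2) ∧
    (∀ k : Fin n, k ∈ Amm g γ w u ∪ Izm g γ w u ∨ (k ∈ Imi g γ w u ∧ 0 < Fm g γ w u k) →
      (γ * gradient g u k - γ * w k) * (γ * hess g u d k)
        ≤ -(γ * gradient g u k - γ * w k) ^ 2) ∧
    (∀ k : Fin n, k ∈ App g γ w u ∪ Amm g γ w u ∪ Izp g γ w u ∪ Izm g γ w u ∨
        (k ∈ Ipl g γ w u ∧ Fm g γ w u k < 0) ∨ (k ∈ Imi g γ w u ∧ 0 < Fm g γ w u k) →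
      u k * d k ≤ -(u k) ^ 2) :=
  stmt6_general g w hw γ hγ u d hd
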